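/- The generating function y = Σ_{n≥1} s(n)x^n of the little Schröder numbers satisfies the algebraic equation 2y² − (1+x)y + x = 0, equivalently y = (1 + x − √(1 − 6x + x²))/4 as formal power series. -/

import Mathlib

/-- A Schröder tree: a single node, or a root with at least two ordered subtrees,
encoded as two subtrees plus a (possibly empty) list of further subtrees. -/
inductive SchTree : Type
  | leaf : SchTree
  | node : SchTree → SchTree → List SchTree → SchTree

mutual
/-- Number of leaves of a Schröder tree. -/
def SchTree.leaves : SchTree → ℕ
  | .leaf => 1
  | .node t₁ t₂ ts => t₁.leaves + t₂.leaves + SchTree.leavesList ts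
def SchTree.leavesList : List SchTree → ℕ
  | [] => 0
  | t :: ts => t.leaves + SchTree.leavesList ts
end

/-- The number of Schröder trees with `n` leaves. -/
noncomputable def schS (n : ℕ) : ℕ := Nat.card {t : SchTree // t.leaves = n}

/-!
Cutting a Schröder tree at its root identifies it with a leaf or with a pair of trees followed
by an ordered forest, and a forest is empty or a tree followed by a forest. Counted by leaves,
the generating functions `T` of trees and `L` of forests thus satisfy `T = x + T²L` and
`L = 1 + TL`; eliminating `L` as `(T - 1)(T - x - T²L) - T²(L - 1 - TL)` leaves
`2T² - (1 + x)T + x = 0`.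
-/

open PowerSeries
open Finset.HasAntidiagonal (antidiagonal mem_antidiagonal)

noncomputable def weightGF (R : Type*) [Semiring R] {A : Type*} (w : A → ℕ) : PowerSeries R :=
  PowerSeries.mk fun n => (Nat.card {a // w a = n} : R)

section weightGF

variable {R : Type*} [Semiring R] {A B : Type*}

theorem coeff_weightGF (w : A → ℕ) (n : ℕ) :
    coeff n (weightGF R w) = Nat.card {a // w a = n} :=
  coeff_mk _ _

theorem weightGF_congr {w : A → ℕ} {w' : B → ℕ} (e : A ≃ B) (he : ∀ a, w' (e a) = w a) :
    weightGF R w = weightGF R w' := by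
  ext n
  simp only [coeff_weightGF]
  rw [Nat.card_congr (e.subtypeEquiv (p := (w · = n)) (q := (w' · = n)) fun a => by rw [he])]

theorem weightGF_const_unit (k : ℕ) : weightGF R (fun _ : Unit => k) = X ^ k := by
  ext n
  rw [coeff_weightGF, coeff_X_pow]
  split_ifs with h
  · subst h
    simp
  · simp [Ne.symm h]

theorem weightGF_sumElim (w₁ : A → ℕ) (w₂ : B → ℕ) [∀ n, Finite {a // w₁ a = n}]
    [∀ n, Finite {b // w₂ b = n}] :
    weightGF R (Sum.elim w₁ w₂) = weightGF R w₁ + weightGF R w₂ := by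
  ext n
  simp only [map_add, coeff_weightGF]
  have e : {x // Sum.elim w₁ w₂ x = n} ≃ {a // w₁ a = n} ⊕ {b // w₂ b = n} := Equiv.subtypeSum
  rw [Nat.card_congr e, Nat.card_sum, Nat.cast_add]

def prodFiberEquiv (w₁ : A → ℕ) (w₂ : B → ℕ) (n : ℕ) :
    {p : A × B // w₁ p.1 + w₂ p.2 = n} ≃
      Σ kl : antidiagonal n, {a // w₁ a = kl.1.1} × {b // w₂ b = kl.1.2} where
  toFun p := ⟨⟨(w₁ p.1.1, w₂ p.1.2), mem_antidiagonal.2 p.2⟩, ⟨p.1.1, rfl⟩, ⟨p.1.2, rfl⟩⟩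
  invFun x := ⟨(x.2.1, x.2.2), by rw [x.2.1.2, x.2.2.2, mem_antidiagonal.1 x.1.2]⟩
  left_inv _ := rfl
  right_inv := by
    rintro ⟨⟨⟨k, l⟩, hkl⟩, ⟨a, ha⟩, ⟨b, hb⟩⟩
    dsimp only at ha hb
    subst ha hb
    rfl

theorem finite_fiber_add (w₁ : A → ℕ) (w₂ : B → ℕ) [∀ n, Finite {a // w₁ a = n}]
    [∀ n, Finite {b // w₂ b = n}] (n : ℕ) : Finite {p : A × B // w₁ p.1 + w₂ p.2 = n} :=
  Finite.of_equiv _ (prodFiberEquiv w₁ w₂ n).symm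

theorem weightGF_add (w₁ : A → ℕ) (w₂ : B → ℕ) [∀ n, Finite {a // w₁ a = n}]
    [∀ n, Finite {b // w₂ b = n}] :
    weightGF R (fun p : A × B => w₁ p.1 + w₂ p.2) = weightGF R w₁ * weightGF R w₂ := by
  ext n
  rw [coeff_mul, coeff_weightGF, Nat.card_congr (prodFiberEquiv w₁ w₂ n), Nat.card_sigma,
    Nat.cast_sum, ← Finset.sum_coe_sort (antidiagonal n)]
  simp only [Nat.card_prod, Nat.cast_mul, coeff_weightGF]

end weightGF

namespace SchTree

variable {R : Type*} [Semiring R]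

theorem one_le_leaves : ∀ t : SchTree, 1 ≤ t.leaves
  | .leaf => le_rfl
  | .node t₁ _ _ => (one_le_leaves t₁).trans (by simp only [leaves]; omega)

theorem finite_leaves_le_succ {n : ℕ} (hT : {t : SchTree | t.leaves ≤ n}.Finite)
    (hL : {ts : List SchTree | leavesList ts ≤ n}.Finite) :
    {t : SchTree | t.leaves ≤ n + 1}.Finite := by
  refine ((Set.finite_singleton leaf).union ((hT.prod (hT.prod hL)).image
    fun p => node p.1 p.2.1 p.2.2)).subset ?_
  rintro (_ | ⟨t₁, t₂, ts⟩) h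
  · exact Or.inl rfl
  · have := t₁.one_le_leaves
    have := t₂.one_le_leaves
    simp only [Set.mem_ofPred_eq, leaves] at h
    exact Or.inr ⟨(t₁, t₂, ts), ⟨by simp; omega, by simp; omega, by simp; omega⟩, rfl⟩

theorem finite_leavesList_le_succ {n : ℕ} (hT : {t : SchTree | t.leaves ≤ n + 1}.Finite)
    (hL : {ts : List SchTree | leavesList ts ≤ n}.Finite) :
    {ts : List SchTree | leavesList ts ≤ n + 1}.Finite := by
  refine ((Set.finite_singleton []).union ((hT.prod hL).image fun p => p.1 :: p.2)).subset ?_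
  rintro (_ | ⟨t, ts⟩) h
  · exact Or.inl rfl
  · have := t.one_le_leaves
    simp only [Set.mem_ofPred_eq, leavesList] at h
    exact Or.inr ⟨(t, ts), ⟨by simp; omega, by simp; omega⟩, rfl⟩

theorem finite_leaves_le_and_leavesList_le (n : ℕ) :
    {t : SchTree | t.leaves ≤ n}.Finite ∧ {ts : List SchTree | leavesList ts ≤ n}.Finite := by
  induction n with
  | zero =>
    refine ⟨Set.finite_empty.subset fun t ht => ?_, (Set.finite_singleton []).subset ?_⟩
    · exact absurd (t.one_le_leaves.trans ht) (by norm_num)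
    · rintro (_ | ⟨t, ts⟩) h
      · rfl
      · have := t.one_le_leaves
        simp only [Set.mem_ofPred_eq, leavesList] at h
        omega
  | succ n ih =>
    have hT := finite_leaves_le_succ ih.1 ih.2
    exact ⟨hT, finite_leavesList_le_succ hT ih.2⟩

instance : IsEmpty {t : SchTree // t.leaves = 0} :=
  ⟨fun t => absurd t.2 (Nat.one_le_iff_ne_zero.1 t.1.one_le_leaves)⟩

instance (n : ℕ) : Finite {t : SchTree // t.leaves = n} :=
  ((finite_leaves_le_and_leavesList_le n).1.subset fun _ h => h.le).to_subtype

instance (n : ℕ) : Finite {ts : List SchTree // leavesList ts = n} :=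
  ((finite_leaves_le_and_leavesList_le n).2.subset fun _ h => h.le).to_subtype

def equivSum : SchTree ≃ Unit ⊕ SchTree × SchTree × List SchTree where
  toFun
    | leaf => .inl ()
    | node t₁ t₂ ts => .inr (t₁, t₂, ts)
  invFun
    | .inl () => leaf
    | .inr (t₁, t₂, ts) => node t₁ t₂ ts
  left_inv := by rintro (_ | _) <;> rfl
  right_inv := by rintro (_ | _) <;> rfl

def listEquivSum : List SchTree ≃ Unit ⊕ SchTree × List SchTree where
  toFun
    | [] => .inl ()
    | t :: ts => .inr (t, ts)
  invFun
    | .inl () => []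
    | .inr (t, ts) => t :: ts
  left_inv := by rintro (_ | _) <;> rfl
  right_inv := by rintro (_ | _) <;> rfl

theorem weightGF_leavesList :
    weightGF R leavesList = 1 + weightGF R leaves * weightGF R leavesList := by
  have := finite_fiber_add leaves leavesList
  refine (weightGF_congr listEquivSum
    (w' := Sum.elim (fun _ => 0) fun p => p.1.leaves + leavesList p.2)
    (by rintro (_ | _) <;> rfl)).trans ?_
  rw [weightGF_sumElim, weightGF_const_unit, weightGF_add, pow_zero]

theorem weightGF_leaves :
    weightGF R leaves = X + weightGF R leaves * (weightGF R leaves * weightGF R leavesList) := by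
  have := finite_fiber_add leaves leavesList
  let w : SchTree × List SchTree → ℕ := fun p => p.1.leaves + leavesList p.2
  have := finite_fiber_add leaves w
  refine (weightGF_congr equivSum
    (w' := Sum.elim (fun _ => 1) fun p => p.1.leaves + (p.2.1.leaves + leavesList p.2.2))
    (by rintro (_ | _) <;> simp [leaves, equivSum, add_assoc])).trans ?_
  rw [weightGF_sumElim, weightGF_const_unit, weightGF_add leaves w, weightGF_add, pow_one]

end SchTree

/-- The generating function `y = Σ_{n ≥ 1} s(n) xⁿ` of the little Schröder numbers
satisfies `2y² - (1+x)y + x = 0`; equivalently `(4y - (1+x))² = 1 - 6x + x²`,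
i.e. `y = (1 + x - √(1-6x+x²))/4`. -/
theorem schroeder_generating_function :
    let y : PowerSeries ℚ := PowerSeries.mk fun n => if n = 0 then 0 else (schS n : ℚ)
    2 * y ^ 2 - (1 + PowerSeries.X) * y + PowerSeries.X = 0 ∧
    (4 * y - (1 + PowerSeries.X)) ^ 2 =
      1 - 6 * PowerSeries.X + PowerSeries.X ^ 2 := by
  intro y
  have hy : y = weightGF ℚ SchTree.leaves := by
    ext n
    rw [coeff_weightGF, coeff_mk]
    split_ifs with hn
    · simp [hn]
    · rfl
  set T := weightGF ℚ SchTree.leaves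
  have hT := SchTree.weightGF_leaves (R := ℚ)
  have hL := SchTree.weightGF_leavesList (R := ℚ)
  have hquad : 2 * y ^ 2 - (1 + X) * y + X = 0 := by
    rw [hy]
    linear_combination (T - 1) * hT - T ^ 2 * hL
  exact ⟨hquad, by linear_combination (8 : PowerSeries ℚ) * hquad⟩
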